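/- Let n, N, S ≥ 1, Δt > 0, m > 0, and let V : ℝ² → ℝ² be continuously differentiable with φ_ε(x) = x + ε V(x). Suppose ψ : ℝ × ℝ² → ℝ² is twice continuously differentiable near {0} × ℝ² with ψ(0, y) = y and φ_ε(ψ(ε, y)) = y for ε near 0. For s = 1,…,S let N_s : ℝ² → ℝ be twice continuously differentiable shape functions and γ_s : ℝ → ℝ nodal boundary-density paths differentiable at ε = 0 with γ_s(0) = γ_s and γ_s′(0) = Dγ_s[V]. For each time step k = 1,…,n and particle i = 1,…,N, let x_k^i ∈ ℝ² be the particle position and let μ_k^i, δ_k^i ∈ ℝ² be given adjoint vectors. Define the ε-dependent boundary force F_ε(y) = ∇_y [ Σ_{s=1}^S γ_s(ε) N_s(ψ(ε, y)) ] and the ε-dependent objective contribution G(ε) = Σ_{k=1}^n Σ_{i=1}^N F_ε(x_k^i)ᵀ ( Δt μ_k^i + Δt² δ_k^i ), where F_ε is evaluated at the fixed particle positions x_k^i and its ε-dependence comprises both the transported shape functions and the perturbed nodal values. Then G is differentiable at ε = 0 with G′(0) = Σ_{k=1}^n Σ_{i=1}^N [ Σ_{s=1}^S Dγ_s[V] ∇N_s(x_k^i)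 − (∇V(x_k^i))ᵀ ( Σ_{s=1}^S γ_s ∇N_s(x_k^i) ) − ( Σ_{s=1}^S γ_s ∇∇N_s(x_k^i) ) V(x_k^i) ]ᵀ ( Δt μ_k^i + Δt² δ_k^i ), where ∇∇N_s denotes the Hessian matrix of N_s. -/

import Mathlib

open RealInnerProductSpace Filter

local notation "E2" => EuclideanSpace ℝ (Fin 2)

set_option maxHeartbeats 1000000 in
theorem core_shape
    (S : ℕ)
    (V : E2 → E2) (hV : ContDiff ℝ 1 V)
    (ψ : ℝ → E2 → E2)
    (hψC2 : ∃ U : Set (ℝ × E2), IsOpen U ∧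
      (∀ y, ((0 : ℝ), y) ∈ U) ∧ ContDiffOn ℝ 2 (fun z => ψ z.1 z.2) U)
    (hψ0 : ∀ y, ψ 0 y = y)
    (hψinv : ∀ᶠ ε in nhds (0 : ℝ), ∀ y, ψ ε y + ε • V (ψ ε y) = y)
    (Ns : Fin S → E2 → ℝ)
    (hNs : ∀ s, ContDiff ℝ 2 (Ns s))
    (γ : Fin S → ℝ → ℝ)
    (hγ : ∀ s, DifferentiableAt ℝ (γ s) 0)
    (p c : E2) :
    HasDerivAt
      (fun ε => ⟪gradient (fun y => ∑ s : Fin S, γ s ε * Ns s (ψ ε y)) p, c⟫)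
      (⟪(∑ s : Fin S, deriv (γ s) 0 • gradient (Ns s) p)
          - (ContinuousLinearMap.adjoint (fderiv ℝ V p))
              (∑ s : Fin S, γ s 0 • gradient (Ns s) p)
          - fderiv ℝ (fun y => ∑ s : Fin S, γ s 0 • gradient (Ns s) y) p (V p),
        c⟫) 0 := by
  obtain ⟨U, hUo, hU0, hF2⟩ := hψC2
  set F : ℝ × E2 → E2 := fun z => ψ z.1 z.2 with hFdef
  have hFat : ∀ z ∈ U, ContDiffAt ℝ 2 F z := fun z hz => hF2.contDiffAt (hUo.mem_nhds hz)
  -- second derivative of F at (0,p)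
  set K : (ℝ × E2) →L[ℝ] (ℝ × E2) →L[ℝ] E2 := fderiv ℝ (fderiv ℝ F) (0, p) with hKdef
  have hfd1 : ContDiffAt ℝ 1 (fderiv ℝ F) (0, p) :=
    (hFat _ (hU0 p)).fderiv_right (by norm_num)
  have hK : HasFDerivAt (fderiv ℝ F) K (0, p) :=
    (hfd1.differentiableAt one_ne_zero).hasFDerivAt
  -- partial derivative setup
  have hline : ∀ y : E2, HasDerivAt (fun ε : ℝ => ((ε : ℝ), y)) ((1 : ℝ), (0 : E2)) 0 :=
    fun y => (hasDerivAt_id 0).prodMk (hasDerivAt_const (x := (0 : ℝ)) (c := y))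
  have hinr : ∀ (ε : ℝ) (y : E2), HasFDerivAt (fun w : E2 => ((ε : ℝ), w))
      (ContinuousLinearMap.inr ℝ ℝ E2) y :=
    fun ε y => HasFDerivAt.prodMk (hasFDerivAt_const ε y) (hasFDerivAt_id y)
  set B : ℝ → (ℝ × E2) →L[ℝ] E2 := fun ε => fderiv ℝ F (ε, p) with hBdef
  set A : ℝ → E2 →L[ℝ] E2 := fun ε => (B ε).comp (ContinuousLinearMap.inr ℝ ℝ E2) with hAdef
  have hB : HasDerivAt B (K (1, 0)) 0 := hK.comp_hasDerivAt 0 (hline p)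
  set M : E2 →L[ℝ] E2 := (K (1, 0)).comp (ContinuousLinearMap.inr ℝ ℝ E2) with hMdef
  have hA : HasDerivAt A M 0 := by
    have := (((ContinuousLinearMap.compL ℝ E2 (ℝ × E2) E2).flip
      (ContinuousLinearMap.inr ℝ ℝ E2)).hasFDerivAt).comp_hasDerivAt 0 hB
    exact this
  -- slice derivatives in y
  have hslice : ∀ ε : ℝ, (ε, p) ∈ U → HasFDerivAt (ψ ε) (A ε) p := by
    intro ε hε
    have hdF : HasFDerivAt F (B ε) (ε, p) :=
      (((hFat _ hε).differentiableAt (by norm_num))).hasFDerivAt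
    exact hdF.comp p (hinr ε p)
  have hA0 : A 0 = ContinuousLinearMap.id ℝ E2 := by
    have h1 : HasFDerivAt (ψ 0) (A 0) p := hslice 0 (hU0 p)
    have h2 : HasFDerivAt (ψ 0) (ContinuousLinearMap.id ℝ E2) p := by
      have : (ψ 0) = (fun y : E2 => y) := funext hψ0
      rw [this]; exact hasFDerivAt_id p
    exact h1.unique h2
  -- derivative in ε at fixed y
  have hεψ : ∀ y : E2, HasDerivAt (fun ε => ψ ε y) (fderiv ℝ F (0, y) (1, 0)) 0 := by
    intro y
    have hdF : HasFDerivAt F (fderiv ℝ F (0, y)) (0, y) :=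
      ((hFat _ (hU0 y)).differentiableAt (by norm_num)).hasFDerivAt
    exact hdF.comp_hasDerivAt 0 (hline y)
  have hgV : ∀ y : E2, fderiv ℝ F (0, y) (1, 0) = -V y := by
    intro y
    have h1 := hεψ y
    have hc : HasDerivAt (fun ε => V (ψ ε y))
        (fderiv ℝ V y (fderiv ℝ F (0, y) (1, 0))) 0 := by
      have hVd : HasFDerivAt V (fderiv ℝ V y) (ψ 0 y) := by
        rw [hψ0]
        exact (hV.differentiable one_ne_zero y).hasFDerivAt
      exact hVd.comp_hasDerivAt 0 h1
    have h2 : HasDerivAt (fun ε : ℝ => ε • V (ψ ε y)) (V y) 0 := by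
      have := (hasDerivAt_id (0 : ℝ)).smul hc
      simp [hψ0] at this; exact this
    have h3 : HasDerivAt (fun ε => ψ ε y + ε • V (ψ ε y))
        (fderiv ℝ F (0, y) (1, 0) + V y) 0 := h1.add h2
    have h4 : HasDerivAt (fun _ : ℝ => y) (fderiv ℝ F (0, y) (1, 0) + V y) 0 := by
      apply h3.congr_of_eventuallyEq
      filter_upwards [hψinv] with ε hε
      exact (hε y).symm
    have h5 := h4.unique (hasDerivAt_const 0 y)
    exact eq_neg_of_add_eq_zero_left h5
  -- symmetry of second derivative
  have hsym : IsSymmSndFDerivAt ℝ F (0, p) :=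
    (hFat _ (hU0 p)).isSymmSndFDerivAt (by simp)
  have hMV : M = -(fderiv ℝ V p) := by
    -- derivative of y ↦ fderiv F (0,y) (1,0) = -V y
    have hg1 : HasFDerivAt (fun y : E2 => fderiv ℝ F (0, y))
        (K.comp (ContinuousLinearMap.inr ℝ ℝ E2)) p :=
      hK.comp p (hinr 0 p)
    have hg2 : HasFDerivAt (fun y : E2 => fderiv ℝ F (0, y) (1, 0))
        ((K.comp (ContinuousLinearMap.inr ℝ ℝ E2)).flip (1, 0)) p := by
      have := hg1.clm_apply (hasFDerivAt_const ((1 : ℝ), (0 : E2)) p)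
      simpa using this
    have hg3 : HasFDerivAt (fun y : E2 => -V y) (-(fderiv ℝ V p)) p :=
      ((hV.differentiable one_ne_zero p).hasFDerivAt).neg
    have hg4 : (fun y : E2 => fderiv ℝ F (0, y) (1, 0)) = fun y : E2 => -V y :=
      funext hgV
    rw [hg4] at hg2
    have h6 := hg2.unique hg3
    ext w
    have h7 : K (0, w) (1, 0) = -(fderiv ℝ V p) w := by
      have := congrFun (congrArg (fun (L : E2 →L[ℝ] E2) => (L : E2 → E2)) h6) w
      simpa using this
    have h8 : K (1, 0) (0, w) = K (0, w) (1, 0) := hsym _ _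
    simp only [hMdef, ContinuousLinearMap.comp_apply, ContinuousLinearMap.inr_apply]
    rw [h8, h7]
    simp
  -- derivative of ε ↦ ψ ε p
  have hc0 : HasDerivAt (fun ε => ψ ε p) (-V p) 0 := by
    have := hεψ p
    rwa [hgV p] at this
  -- gradient of Ns is C¹
  have hgradC1 : ∀ s : Fin S, ContDiff ℝ 1 (gradient (Ns s)) := by
    intro s
    have h1 : ContDiff ℝ 1 (fderiv ℝ (Ns s)) := (hNs s).fderiv_right (by norm_num)
    have h2 : gradient (Ns s) =
        fun y => (InnerProductSpace.toDual ℝ E2).symm (fderiv ℝ (Ns s) y) := rfl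
    rw [h2]
    exact (InnerProductSpace.toDual ℝ E2).symm.contDiff.comp h1
  -- derivative of ε ↦ gradient Ns (ψ ε p)
  have hq : ∀ s : Fin S, HasDerivAt (fun ε => gradient (Ns s) (ψ ε p))
      (fderiv ℝ (gradient (Ns s)) p (-V p)) 0 := by
    intro s
    have hd : HasFDerivAt (gradient (Ns s)) (fderiv ℝ (gradient (Ns s)) p) (ψ 0 p) := by
      rw [hψ0]
      exact (((hgradC1 s).differentiable one_ne_zero) p).hasFDerivAt
    exact hd.comp_hasDerivAt 0 hc0
  -- derivative of ε ↦ A ε c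
  have hAc : HasDerivAt (fun ε => A ε c) (M c) 0 := by
    have := hA.clm_apply (hasDerivAt_const (0 : ℝ) c)
    simpa using this
  -- the explicit formula for the inner product, valid near 0
  have hev : ∀ᶠ ε in nhds (0 : ℝ), (ε, p) ∈ U := by
    have hcont : ContinuousAt (fun ε : ℝ => ((ε : ℝ), p)) 0 :=
      (continuous_id.prodMk continuous_const).continuousAt
    exact hcont.eventually_mem (hUo.mem_nhds (hU0 p))
  have key : ∀ ε : ℝ, (ε, p) ∈ U →
      ⟪gradient (fun y => ∑ s : Fin S, γ s ε * Ns s (ψ ε y)) p, c⟫ =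
        ∑ s : Fin S, γ s ε * ⟪gradient (Ns s) (ψ ε p), A ε c⟫ := by
    intro ε hε
    have hder : HasFDerivAt (fun y => ∑ s : Fin S, γ s ε * Ns s (ψ ε y))
        (∑ s : Fin S, γ s ε • ((fderiv ℝ (Ns s) (ψ ε p)).comp (A ε))) p := by
      apply HasFDerivAt.fun_sum
      intro s _
      have h1 : HasFDerivAt (Ns s) (fderiv ℝ (Ns s) (ψ ε p)) (ψ ε p) :=
        (((hNs s).differentiable (by norm_num)) (ψ ε p)).hasFDerivAt
      exact (h1.comp p (hslice ε hε)).const_mul (γ s ε)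
    have hgr := (hasFDerivAt_iff_hasGradientAt.1 hder).gradient
    rw [hgr, InnerProductSpace.toDual_symm_apply]
    rw [ContinuousLinearMap.sum_apply]
    refine Finset.sum_congr rfl fun s _ => ?_
    have h2 : ⟪gradient (Ns s) (ψ ε p), A ε c⟫ = fderiv ℝ (Ns s) (ψ ε p) (A ε c) :=
      InnerProductSpace.toDual_symm_apply
    rw [ContinuousLinearMap.smul_apply, ContinuousLinearMap.comp_apply, h2]
    simp
  -- derivative of the explicit formula
  have hR : HasDerivAt
      (fun ε => ∑ s : Fin S, γ s ε * ⟪gradient (Ns s) (ψ ε p), A ε c⟫)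
      (∑ s : Fin S, (deriv (γ s) 0 * ⟪gradient (Ns s) (ψ 0 p), A 0 c⟫ +
        γ s 0 * (⟪gradient (Ns s) (ψ 0 p), M c⟫ +
          ⟪fderiv ℝ (gradient (Ns s)) p (-V p), A 0 c⟫))) 0 := by
    apply HasDerivAt.fun_sum
    intro s _
    exact ((hγ s).hasDerivAt).mul ((hq s).inner ℝ hAc)
  -- transfer along the eventual equality
  have hG : HasDerivAt
      (fun ε => ⟪gradient (fun y => ∑ s : Fin S, γ s ε * Ns s (ψ ε y)) p, c⟫)
      (∑ s : Fin S, (deriv (γ s) 0 * ⟪gradient (Ns s) (ψ 0 p), A 0 c⟫ +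
        γ s 0 * (⟪gradient (Ns s) (ψ 0 p), M c⟫ +
          ⟪fderiv ℝ (gradient (Ns s)) p (-V p), A 0 c⟫))) 0 := by
    apply hR.congr_of_eventuallyEq
    filter_upwards [hev] with ε hε
    exact key ε hε
  -- identify the derivative with the stated expression
  have hfs : HasFDerivAt (fun y => ∑ s : Fin S, γ s 0 • gradient (Ns s) y)
      (∑ s : Fin S, γ s 0 • fderiv ℝ (gradient (Ns s)) p) p := by
    apply HasFDerivAt.fun_sum
    intro s _
    exact ((((hgradC1 s).differentiable one_ne_zero) p).hasFDerivAt).const_smul (γ s 0)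
  have heq : (∑ s : Fin S, (deriv (γ s) 0 * ⟪gradient (Ns s) (ψ 0 p), A 0 c⟫ +
        γ s 0 * (⟪gradient (Ns s) (ψ 0 p), M c⟫ +
          ⟪fderiv ℝ (gradient (Ns s)) p (-V p), A 0 c⟫))) =
      ⟪(∑ s : Fin S, deriv (γ s) 0 • gradient (Ns s) p)
          - (ContinuousLinearMap.adjoint (fderiv ℝ V p))
              (∑ s : Fin S, γ s 0 • gradient (Ns s) p)
          - fderiv ℝ (fun y => ∑ s : Fin S, γ s 0 • gradient (Ns s) y) p (V p),
        c⟫ := by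
    rw [hfs.fderiv, hA0, hMV]
    rw [inner_sub_left, inner_sub_left]
    rw [sum_inner, ContinuousLinearMap.adjoint_inner_left, ContinuousLinearMap.sum_apply,
      sum_inner, sum_inner]
    rw [← Finset.sum_sub_distrib, ← Finset.sum_sub_distrib]
    refine Finset.sum_congr rfl fun s _ => ?_
    rw [hψ0]
    simp only [ContinuousLinearMap.id_apply, ContinuousLinearMap.neg_apply, map_neg,
      real_inner_smul_left, inner_neg_right, inner_neg_left,
      ContinuousLinearMap.smul_apply]
    ring
  rw [← heq]
  exact hG

/-- shape derivative of the adjoint-weighted SPH boundary force term,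
Theorem `Shape Derivative`: with transported shape functions `N_s(ψ(ε,·))`, perturbed
nodal boundary densities `γ_s(ε)`, particle positions `x_k^i` moving along the
deformation, and adjoint vectors `μ_k^i, δ_k^i`, the map
`G(ε) = Σ_k Σ_i F_ε(x_k^i)ᵀ (Δt μ_k^i + Δt² δ_k^i)`, where
`F_ε(y) = ∇_y [Σ_s γ_s(ε) N_s(ψ(ε,y))]`, is differentiable at `ε = 0` with the stated
derivative. -/
theorem shape_derivative_boundary_force_term
    (n N S : ℕ) (hn : 1 ≤ n) (hN : 1 ≤ N) (hS : 1 ≤ S)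
    (Δt m : ℝ) (hΔt : 0 < Δt) (hm : 0 < m)
    (V : EuclideanSpace ℝ (Fin 2) → EuclideanSpace ℝ (Fin 2)) (hV : ContDiff ℝ 1 V)
    (ψ : ℝ → EuclideanSpace ℝ (Fin 2) → EuclideanSpace ℝ (Fin 2))
    (hψC2 : ∃ U : Set (ℝ × EuclideanSpace ℝ (Fin 2)), IsOpen U ∧
      (∀ y, ((0 : ℝ), y) ∈ U) ∧ ContDiffOn ℝ 2 (fun z => ψ z.1 z.2) U)
    (hψ0 : ∀ y, ψ 0 y = y)
    (hψinv : ∀ᶠ ε in nhds (0 : ℝ), ∀ y, ψ ε y + ε • V (ψ ε y) = y)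
    (Ns : Fin S → EuclideanSpace ℝ (Fin 2) → ℝ)
    (hNs : ∀ s, ContDiff ℝ 2 (Ns s))
    (γ : Fin S → ℝ → ℝ)
    (hγ : ∀ s, DifferentiableAt ℝ (γ s) 0)
    (x μ δ : Fin n → Fin N → EuclideanSpace ℝ (Fin 2)) :
    HasDerivAt
      (fun ε => ∑ k : Fin n, ∑ i : Fin N,
        ⟪gradient (fun y => ∑ s : Fin S, γ s ε * Ns s (ψ ε y)) (x k i),
          Δt • μ k i + Δt ^ 2 • δ k i⟫)
      (∑ k : Fin n, ∑ i : Fin N,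
        ⟪(∑ s : Fin S, deriv (γ s) 0 • gradient (Ns s) (x k i))
            - (ContinuousLinearMap.adjoint (fderiv ℝ V (x k i)))
                (∑ s : Fin S, γ s 0 • gradient (Ns s) (x k i))
            - fderiv ℝ (fun y => ∑ s : Fin S, γ s 0 • gradient (Ns s) y) (x k i)
                (V (x k i)),
          Δt • μ k i + Δt ^ 2 • δ k i⟫) 0 := by
  apply HasDerivAt.fun_sum
  intro k _
  apply HasDerivAt.fun_sum
  intro i _
  exact core_shape S V hV ψ hψC2 hψ0 hψinv Ns hNs γ hγ (x k i)
    (Δt • μ k i + Δt ^ 2 • δ k i)
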